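/- Let k ≥ 1 and m ≥ 2 be integers, and for each 2 ≤ j ≤ m let φ_j : ℂ^k → [0, ∞) be a smooth function with compact support contained in 𝔻^k. Then there exists a constant c > 0 such that for every real λ ≥ 1 and all points x^{(1)}, …, x^{(m)} ∈ 𝔻^k the quantity I := λ^{2k(m−1)} · ∫_{(ℂ^k)^{m−1}} φ₂(λ z^{(2)}) ⋯ φ_m(λ z^{(m)}) · |log( Σ_{j=2}^{m} ‖x^{(j)} − x^{(1)} − z^{(j)}‖ )| dz^{(2)} ⋯ dz^{(m)} satisfies I ≤ c + c · log λ; moreover, if S := Σ_{j=2}^{m} ‖x^{(j)} − x^{(1)}‖ is strictly positive, then in addition I ≤ c + c · min( log λ, |log S| ). -/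

import Mathlib

open MeasureTheory Finset

section AuxLemmas

open Metric Set

/-! ### `negLog` -/

noncomputable def negLog (t : ℝ) : ℝ := max 0 (-Real.log t)

lemma negLog_nonneg (t : ℝ) : 0 ≤ negLog t := le_max_left _ _

lemma negLog_zero : negLog 0 = 0 := by simp [negLog]

lemma negLog_anti {a b : ℝ} (ha : 0 < a) (hab : a ≤ b) : negLog b ≤ negLog a :=
  max_le_max le_rfl (neg_le_neg (Real.log_le_log ha hab))

lemma negLog_inv_mul {l t : ℝ} (hl : 1 ≤ l) (ht : 0 ≤ t) :
    negLog (l⁻¹ * t) ≤ Real.log l + negLog t := by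
  have hl0 : (0:ℝ) < l := lt_of_lt_of_le one_pos hl
  have hlog : 0 ≤ Real.log l := Real.log_nonneg hl
  rcases eq_or_lt_of_le ht with h | h
  · simp [← h, negLog_zero]; positivity
  · have : Real.log (l⁻¹ * t) = -Real.log l + Real.log t := by
      rw [Real.log_mul (by positivity) (ne_of_gt h), Real.log_inv]
    simp only [negLog, this]
    rcases le_total 0 (-Real.log t) with h1 | h1
    · apply max_le (by positivity)
      have : max 0 (-Real.log t) = -Real.log t := max_eq_right h1
      rw [this]; ring_nf; linarith
    · have h2 : max 0 (-Real.log t) = 0 := max_eq_left (by linarith)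
      rw [h2]
      apply max_le (by linarith)
      linarith

lemma abs_log_le_add {t M : ℝ} (hM : 1 ≤ M) (ht0 : 0 < t) (ht : t ≤ M) :
    |Real.log t| ≤ Real.log M + negLog t := by
  have h1 : 0 ≤ Real.log M := Real.log_nonneg hM
  have h2 : -Real.log t ≤ negLog t := le_max_right _ _
  have h3 : 0 ≤ negLog t := negLog_nonneg t
  have h4 : Real.log t ≤ Real.log M := Real.log_le_log ht0 ht
  rw [abs_le]; constructor <;> linarith

lemma abs_log_near {S t : ℝ} (hS : 0 < S) (h : |t - S| ≤ S / 2) :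
    |Real.log t| ≤ |Real.log S| + Real.log 2 := by
  have habs := abs_le.1 h
  have ht0 : 0 < t := by linarith
  have hup : Real.log t ≤ Real.log S + Real.log 2 := by
    calc Real.log t ≤ Real.log (2 * S) := Real.log_le_log ht0 (by linarith)
      _ = Real.log 2 + Real.log S := Real.log_mul two_ne_zero hS.ne'
      _ = _ := by ring
  have hdown : -(Real.log t) ≤ -Real.log S + Real.log 2 := by
    have : Real.log (S / 2) ≤ Real.log t := Real.log_le_log (by linarith) (by linarith)
    rw [Real.log_div hS.ne' two_ne_zero] at this
    linarith
  have h1 := le_abs_self (Real.log S)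
  have h2 := neg_abs_le (Real.log S)
  rw [abs_le]; constructor <;> linarith

lemma one_le_sqrt_k {k : ℕ} (hk : 1 ≤ k) : 1 ≤ Real.sqrt k := by
  have := Real.sqrt_le_sqrt (show (1:ℝ) ≤ k by exact_mod_cast hk)
  simpa [Real.sqrt_one] using this

lemma nontrivial_V {k : ℕ} (hk : 1 ≤ k) : Nontrivial (Fin k → ℂ) := by
  have : Nonempty (Fin k) := ⟨⟨0, hk⟩⟩
  refine ⟨0, fun _ => 1, ?_⟩
  intro h
  have := congrFun h ⟨0, hk⟩
  simp at this

lemma finrank_V (k : ℕ) : Module.finrank ℝ (Fin k → ℂ) = 2 * k := by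
  simp [Module.finrank_pi_fintype, Complex.finrank_real_complex]; ring

end AuxLemmas

/-- The Euclidean (Hermitian) norm on `ℂ^k` presented as functions `Fin k → ℂ`. -/
noncomputable def euclideanNormC {k : ℕ} (z : Fin k → ℂ) : ℝ :=
  ‖(WithLp.equiv 2 (Fin k → ℂ)).symm z‖

namespace euclideanNormC

variable {k : ℕ}

lemma nonneg (z : Fin k → ℂ) : 0 ≤ euclideanNormC z := norm_nonneg _

lemma eq_zero_iff {z : Fin k → ℂ} : euclideanNormC z = 0 ↔ z = 0 := by
  unfold euclideanNormC
  rw [norm_eq_zero]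
  constructor
  · intro h; exact congrArg (WithLp.equiv 2 (Fin k → ℂ)) h
  · intro h; rw [h]; rfl

lemma sub_eq (a b : Fin k → ℂ) : (WithLp.equiv 2 (Fin k → ℂ)).symm (a - b)
    = (WithLp.equiv 2 (Fin k → ℂ)).symm a - (WithLp.equiv 2 (Fin k → ℂ)).symm b := rfl

lemma abs_sub_le (a b : Fin k → ℂ) :
    |euclideanNormC (a - b) - euclideanNormC a| ≤ euclideanNormC b := by
  unfold euclideanNormC; rw [sub_eq]
  simpa using abs_norm_sub_norm_le
    ((WithLp.equiv 2 (Fin k → ℂ)).symm a - (WithLp.equiv 2 (Fin k → ℂ)).symm b)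
    ((WithLp.equiv 2 (Fin k → ℂ)).symm a)

lemma eq_sqrt (z : Fin k → ℂ) : euclideanNormC z = Real.sqrt (∑ i, ‖z i‖^2) := by
  unfold euclideanNormC; rw [EuclideanSpace.norm_eq]; simp

lemma norm_le (z : Fin k → ℂ) : ‖z‖ ≤ euclideanNormC z := by
  rcases Nat.eq_zero_or_pos k with hk | hk
  · subst hk
    have : z = 0 := Subsingleton.elim _ _
    subst this
    simp only [norm_zero]
    exact nonneg _
  · rw [eq_sqrt]
    apply pi_norm_le_iff_of_nonneg (Real.sqrt_nonneg _) |>.2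
    intro i
    rw [show ‖z i‖ = Real.sqrt (‖z i‖^2) from (Real.sqrt_sq (norm_nonneg _)).symm]
    exact Real.sqrt_le_sqrt (Finset.single_le_sum (f := fun i => ‖z i‖^2)
      (fun i _ => by positivity) (mem_univ i))

lemma le_of_coords {z : Fin k → ℂ} {c : ℝ} (hc : 0 ≤ c) (h : ∀ i, ‖z i‖ ≤ c) :
    euclideanNormC z ≤ Real.sqrt k * c := by
  rw [eq_sqrt]
  have hsum : ∑ i, ‖z i‖^2 ≤ (k : ℝ) * c^2 := by
    calc ∑ i, ‖z i‖^2 ≤ ∑ _i : Fin k, c^2 := by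
          apply Finset.sum_le_sum; intro i _
          have := h i; nlinarith [norm_nonneg (z i)]
      _ = (k : ℝ) * c^2 := by rw [Finset.sum_const, Finset.card_univ]; simp
  calc Real.sqrt (∑ i, ‖z i‖^2) ≤ Real.sqrt ((k : ℝ) * c^2) := Real.sqrt_le_sqrt hsum
    _ = Real.sqrt k * c := by
        rw [Real.sqrt_mul (by positivity), Real.sqrt_sq hc]

end euclideanNormC

section W0

open Metric Set

noncomputable def W0 (k : ℕ) : (Fin k → ℂ) → ℝ :=
  (Metric.closedBall (0 : Fin k → ℂ) 1).indicator (fun u => negLog ‖u‖)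

lemma W0_nonneg (k : ℕ) (u : Fin k → ℂ) : 0 ≤ W0 k u :=
  Set.indicator_nonneg (fun y _ => negLog_nonneg _) u

lemma W0_measurable (k : ℕ) : Measurable (W0 k) := by
  apply Measurable.indicator _ measurableSet_closedBall
  exact (measurable_const.max (Real.measurable_log.comp measurable_norm).neg)

lemma negLog_norm_eq_W0 {k : ℕ} (b u : Fin k → ℂ) : negLog ‖b - u‖ = W0 k (u - b) := by
  rw [norm_sub_rev]
  unfold W0
  rcases le_or_gt ‖u - b‖ 1 with h | h
  · rw [Set.indicator_of_mem (by simpa [mem_closedBall, dist_zero_right] using h)]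
  · rw [Set.indicator_of_notMem (by simpa [mem_closedBall, dist_zero_right] using h)]
    have : 0 < Real.log ‖u - b‖ := Real.log_pos h
    simp [negLog]; linarith

lemma W0_integrable {k : ℕ} (hk : 1 ≤ k) : Integrable (W0 k) := by
  haveI : Nontrivial (Fin k → ℂ) := nontrivial_V hk
  have hnn : (0 : (Fin k → ℂ) → ℝ) ≤ᵐ[volume] W0 k := Filter.Eventually.of_forall (W0_nonneg k)
  refine ⟨(W0_measurable k).aestronglyMeasurable, ?_⟩
  rw [hasFiniteIntegral_iff_ofReal hnn,
    lintegral_eq_lintegral_meas_lt volume hnn (W0_measurable k).aemeasurable]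
  have key : ∀ t ∈ Set.Ioi (0:ℝ), volume {a : Fin k → ℂ | t < W0 k a}
      ≤ ENNReal.ofReal (Real.exp (-t)) * volume (Metric.ball (0 : Fin k → ℂ) 1) := by
    intro t ht
    have ht0 : (0:ℝ) < t := ht
    have hsub : {a : Fin k → ℂ | t < W0 k a} ⊆ Metric.ball (0 : Fin k → ℂ) (Real.exp (-t)) := by
      intro a ha
      simp only [Set.mem_setOf_eq] at ha
      have hmem : a ∈ Metric.closedBall (0 : Fin k → ℂ) 1 := by
        by_contra hmem
        rw [W0, Set.indicator_of_notMem hmem] at ha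
        linarith
      rw [W0, Set.indicator_of_mem hmem] at ha
      have hlog : Real.log ‖a‖ < -t := by
        rcases max_cases (0:ℝ) (-Real.log ‖a‖) with ⟨h1, _⟩ | ⟨h1, _⟩
        · rw [negLog, h1] at ha; linarith
        · rw [negLog, h1] at ha; linarith
      have hapos : 0 < ‖a‖ := by
        rcases eq_or_lt_of_le (norm_nonneg a) with h | h
        · exfalso; rw [← h, Real.log_zero] at hlog; linarith
        · exact h
      rw [mem_ball, dist_zero_right]
      calc ‖a‖ = Real.exp (Real.log ‖a‖) := (Real.exp_log hapos).symm
        _ < Real.exp (-t) := Real.exp_lt_exp.2 hlog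
    calc volume {a : Fin k → ℂ | t < W0 k a}
        ≤ volume (Metric.ball (0 : Fin k → ℂ) (Real.exp (-t))) := measure_mono hsub
      _ = ENNReal.ofReal (Real.exp (-t) ^ Module.finrank ℝ (Fin k → ℂ)) *
            volume (Metric.ball (0 : Fin k → ℂ) 1) :=
          Measure.addHaar_ball volume _ (Real.exp_nonneg _)
      _ ≤ ENNReal.ofReal (Real.exp (-t)) * volume (Metric.ball (0 : Fin k → ℂ) 1) := by
          apply mul_le_mul_left
          apply ENNReal.ofReal_le_ofReal
          apply pow_le_of_le_one (Real.exp_nonneg _) (Real.exp_le_one_iff.2 (by linarith))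
          rw [finrank_V]; omega
  calc ∫⁻ t in Set.Ioi (0:ℝ), volume {a : Fin k → ℂ | t < W0 k a}
      ≤ ∫⁻ t in Set.Ioi (0:ℝ), ENNReal.ofReal (Real.exp (-t)) *
          volume (Metric.ball (0 : Fin k → ℂ) 1) := setLIntegral_mono' measurableSet_Ioi key
    _ = (∫⁻ t in Set.Ioi (0:ℝ), ENNReal.ofReal (Real.exp (-t))) *
          volume (Metric.ball (0 : Fin k → ℂ) 1) := by
        rw [lintegral_mul_const]
        exact (Real.measurable_exp.comp measurable_neg).ennreal_ofReal
    _ < ⊤ := by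
        apply ENNReal.mul_lt_top _ measure_ball_lt_top
        have hint : IntegrableOn (fun t : ℝ => Real.exp (-t)) (Set.Ioi (0:ℝ)) := by
          simpa using exp_neg_integrableOn_Ioi 0 one_pos
        rw [← ofReal_integral_eq_lintegral_ofReal hint
          (Filter.Eventually.of_forall fun t => (Real.exp_nonneg _))]
        exact ENNReal.ofReal_lt_top

end W0

section Scaling

lemma scale_int (k : ℕ) (f : (Fin k → ℂ) → ℝ) {l : ℝ} (hl : 0 ≤ l) :
    ∫ w : Fin k → ℂ, f (l • w) = (l ^ (2*k))⁻¹ * ∫ u, f u := by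
  rw [MeasureTheory.Measure.integral_comp_smul_of_nonneg volume f l (hR := hl), finrank_V,
    smul_eq_mul]

lemma phi_scaled_integrable {k : ℕ} {φ : (Fin k → ℂ) → ℝ} (hcont : Continuous φ)
    (hcpt : HasCompactSupport φ) {l : ℝ} (hl : 0 < l) :
    Integrable (fun w : Fin k → ℂ => φ (l • w)) :=
  (hcont.comp (continuous_const_smul l)).integrable_of_hasCompactSupport
    (hcpt.comp_smul (ne_of_gt hl))

lemma negLog_measurable_comp {k : ℕ} (y : Fin k → ℂ) :
    Measurable (fun w : Fin k → ℂ => negLog ‖y - w‖) :=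
  measurable_const.max (Real.measurable_log.comp
    ((continuous_const.sub continuous_id).norm.measurable)).neg

lemma single_estimate {k : ℕ} (hk : 1 ≤ k) {φ : (Fin k → ℂ) → ℝ} (hcont : Continuous φ)
    (hnn : ∀ w, 0 ≤ φ w) (hcpt : HasCompactSupport φ) {B : ℝ} (hB : ∀ w, φ w ≤ B)
    {C₁ : ℝ} (hC₁ : 0 ≤ C₁) {l : ℝ} (hl : 1 ≤ l) (y : Fin k → ℂ) :
    Integrable (fun w : Fin k → ℂ => φ (l • w) * (C₁ + negLog ‖y - w‖)) ∧
    ∫ w : Fin k → ℂ, φ (l • w) * (C₁ + negLog ‖y - w‖)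
      ≤ (l ^ (2*k))⁻¹ * ((C₁ + Real.log l) * (∫ u, φ u) + B * ∫ u, W0 k u) := by
  have hl0 : (0:ℝ) < l := lt_of_lt_of_le one_pos hl
  have hB0 : 0 ≤ B := le_trans (hnn 0) (hB 0)
  set f : (Fin k → ℂ) → ℝ := fun w => φ (l • w) * (C₁ + negLog ‖y - w‖) with hf
  have hf_nn : ∀ w, 0 ≤ f w := fun w =>
    mul_nonneg (hnn _) (add_nonneg hC₁ (negLog_nonneg _))
  have hf_meas : AEStronglyMeasurable f volume := by
    apply AEStronglyMeasurable.mul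
    · exact (hcont.comp (continuous_const_smul l)).aestronglyMeasurable
    · exact (measurable_const.add (negLog_measurable_comp y)).aestronglyMeasurable
  have hmaj_int : Integrable (fun w : Fin k → ℂ =>
      C₁ * φ (l • w) + B * W0 k (w - y)) := by
    apply Integrable.add
    · exact (phi_scaled_integrable hcont hcpt hl0).const_mul C₁
    · exact ((W0_integrable hk).comp_sub_right y).const_mul B
  have hf_le : ∀ w, f w ≤ C₁ * φ (l • w) + B * W0 k (w - y) := by
    intro w
    have h1 : φ (l • w) * negLog ‖y - w‖ ≤ B * W0 k (w - y) := by
      rw [negLog_norm_eq_W0 y w]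
      exact mul_le_mul_of_nonneg_right (hB _) (W0_nonneg _ _)
    calc f w = C₁ * φ (l • w) + φ (l • w) * negLog ‖y - w‖ := by rw [hf]; ring
      _ ≤ _ := by linarith
  have hf_int : Integrable f := by
    apply hmaj_int.mono' hf_meas
    refine Filter.Eventually.of_forall fun w => ?_
    rw [Real.norm_eq_abs, abs_of_nonneg (hf_nn w)]
    exact hf_le w
  refine ⟨hf_int, ?_⟩
  set F : (Fin k → ℂ) → ℝ := fun u => φ u * (C₁ + negLog (l⁻¹ * ‖l • y - u‖)) with hF
  have hFf : ∀ w, F (l • w) = f w := by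
    intro w
    have : l⁻¹ * ‖l • y - l • w‖ = ‖y - w‖ := by
      rw [← smul_sub, norm_smul, Real.norm_eq_abs, abs_of_pos hl0]
      field_simp
    rw [hF, hf]
    simp only [this]
  have step1 : ∫ w, f w = (l ^ (2*k))⁻¹ * ∫ u, F u := by
    rw [show f = fun w => F (l • w) from funext fun w => (hFf w).symm]
    exact scale_int k F hl0.le
  have hG_int : Integrable (fun u : Fin k → ℂ =>
      φ u * (C₁ + Real.log l) + B * W0 k (u - l • y)) := by
    apply Integrable.add
    · exact (hcont.integrable_of_hasCompactSupport hcpt).mul_const _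
    · exact ((W0_integrable hk).comp_sub_right (l • y)).const_mul B
  have step2 : ∫ u, F u ≤ ∫ u, (φ u * (C₁ + Real.log l) + B * W0 k (u - l • y)) := by
    apply integral_mono_of_nonneg
    · exact Filter.Eventually.of_forall fun u =>
        mul_nonneg (hnn _) (add_nonneg hC₁ (negLog_nonneg _))
    · exact hG_int
    · refine Filter.Eventually.of_forall fun u => ?_
      show F u ≤ φ u * (C₁ + Real.log l) + B * W0 k (u - l • y)
      have h1 : negLog (l⁻¹ * ‖l • y - u‖) ≤ Real.log l + negLog ‖l • y - u‖ :=
        negLog_inv_mul hl (norm_nonneg _)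
      have h2 : φ u * negLog ‖l • y - u‖ ≤ B * W0 k (u - l • y) := by
        rw [negLog_norm_eq_W0 (l • y) u]
        exact mul_le_mul_of_nonneg_right (hB _) (W0_nonneg _ _)
      have h3 : φ u * (C₁ + negLog (l⁻¹ * ‖l • y - u‖))
          ≤ φ u * (C₁ + Real.log l + negLog ‖l • y - u‖) :=
        mul_le_mul_of_nonneg_left (by linarith) (hnn u)
      calc F u ≤ φ u * (C₁ + Real.log l + negLog ‖l • y - u‖) := h3
        _ = φ u * (C₁ + Real.log l) + φ u * negLog ‖l • y - u‖ := by ring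
        _ ≤ _ := by linarith
  have step3 : ∫ u, (φ u * (C₁ + Real.log l) + B * W0 k (u - l • y))
      = (C₁ + Real.log l) * (∫ u, φ u) + B * ∫ u, W0 k u := by
    rw [integral_add ((hcont.integrable_of_hasCompactSupport hcpt).mul_const _)
      (((W0_integrable hk).comp_sub_right (l • y)).const_mul B),
      integral_mul_const, integral_const_mul, integral_sub_right_eq_self (W0 k) (l • y)]
    ring
  rw [step1]
  apply mul_le_mul_of_nonneg_left _ (by positivity)
  rw [← step3]
  exact step2

end Scaling

section Master

lemma master {k n : ℕ} (hn : 1 ≤ n) (φ : Fin n → ((Fin k → ℂ) → ℝ))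
    (hcont : ∀ j, Continuous (φ j)) (hnn : ∀ j w, 0 ≤ φ j w)
    (hcpt : ∀ j, HasCompactSupport (φ j)) {l : ℝ} (hl : 1 ≤ l)
    (G : (Fin n → Fin k → ℂ) → ℝ) (hG : ∀ z, 0 ≤ G z)
    (ψf : (Fin k → ℂ) → ℝ) (hψf : ∀ w, 0 ≤ ψf w)
    (hψint : Integrable (fun w : Fin k → ℂ => φ ⟨0, hn⟩ (l • w) * ψf w))
    (T : ℝ) (hT : 0 ≤ T)
    (hTle : ∫ w : Fin k → ℂ, φ ⟨0, hn⟩ (l • w) * ψf w ≤ (l ^ (2*k))⁻¹ * T)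
    (hpt : ∀ᵐ z : Fin n → Fin k → ℂ,
      (∏ j, φ j (l • z j)) * G z ≤ (∏ j, φ j (l • z j)) * ψf (z ⟨0, hn⟩)) :
    l ^ (2*k*n) * ∫ z : Fin n → Fin k → ℂ, (∏ j, φ j (l • z j)) * G z
      ≤ (∏ j ∈ univ.erase (⟨0, hn⟩ : Fin n), ∫ u, φ j u) * T := by
  have hl0 : (0:ℝ) < l := lt_of_lt_of_le one_pos hl
  set j₀ : Fin n := ⟨0, hn⟩
  set ψ : Fin n → (Fin k → ℂ) → ℝ :=
    fun j w => φ j (l • w) * (if j = j₀ then ψf w else 1) with hψ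
  have hψ_nonneg : ∀ j w, 0 ≤ ψ j w := by
    intro j w
    apply mul_nonneg (hnn _ _)
    split <;> [exact hψf w; norm_num]
  have hψ_int : ∀ j, Integrable (ψ j) := by
    intro j
    by_cases h : j = j₀
    · subst h
      simpa only [hψ, if_pos rfl, ↓reduceIte] using hψint
    · simp only [hψ, if_neg h, mul_one]
      exact phi_scaled_integrable (hcont j) (hcpt j) hl0
  have hprod_eq : ∀ z : Fin n → Fin k → ℂ,
      (∏ j, ψ j (z j)) = (∏ j, φ j (l • z j)) * ψf (z j₀) := by
    intro z
    rw [hψ]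
    rw [Finset.prod_mul_distrib]
    congr 1
    rw [Finset.prod_ite_eq' univ j₀ (fun j => ψf (z j))]
    simp
  have hg_int : Integrable (fun z : Fin n → Fin k → ℂ => ∏ j, ψ j (z j)) :=
    Integrable.fintype_prod (𝕜 := ℝ) hψ_int
  have step1 : ∫ z : Fin n → Fin k → ℂ, (∏ j, φ j (l • z j)) * G z
      ≤ ∫ z : Fin n → Fin k → ℂ, ∏ j, ψ j (z j) := by
    apply integral_mono_of_nonneg
    · exact Filter.Eventually.of_forall fun z =>
        mul_nonneg (Finset.prod_nonneg fun j _ => hnn _ _) (hG z)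
    · exact hg_int
    · filter_upwards [hpt] with z hz
      rw [hprod_eq z]
      exact hz
  have step2 : ∫ z : Fin n → Fin k → ℂ, ∏ j, ψ j (z j) = ∏ j, ∫ w, ψ j w :=
    MeasureTheory.integral_fin_nat_prod_eq_prod ψ
  set Q : Fin n → ℝ := fun j => if j = j₀ then T else ∫ u, φ j u with hQ
  have hQ_nonneg : ∀ j, 0 ≤ Q j := by
    intro j
    by_cases h : j = j₀
    · simp only [hQ, if_pos h]; exact hT
    · simp only [hQ, if_neg h]; exact integral_nonneg fun u => hnn _ _
  have step3 : ∏ j, ∫ w, ψ j w ≤ ∏ j, ((l ^ (2*k))⁻¹ * Q j) := by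
    apply Finset.prod_le_prod
    · intro j _
      exact integral_nonneg fun w => hψ_nonneg j w
    · intro j _
      by_cases h : j = j₀
      · subst h
        simp only [hψ, hQ, if_pos rfl]
        exact hTle
      · simp only [hψ, hQ, if_neg h, mul_one]
        rw [scale_int k (φ j) hl0.le]
  have step4 : ∏ j, ((l ^ (2*k))⁻¹ * Q j)
      = ((l ^ (2*k))⁻¹) ^ n * (T * ∏ j ∈ univ.erase j₀, ∫ u, φ j u) := by
    rw [Finset.prod_mul_distrib, Finset.prod_const, Finset.card_univ, Fintype.card_fin]
    congr 1
    rw [← Finset.mul_prod_erase univ Q (mem_univ j₀)]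
    have h1 : Q j₀ = T := if_pos rfl
    have h2 : ∏ j ∈ univ.erase j₀, Q j = ∏ j ∈ univ.erase j₀, ∫ u, φ j u :=
      Finset.prod_congr rfl fun j hj => if_neg (Finset.mem_erase.1 hj).1
    rw [h1, h2]
  have hpow : l ^ (2*k*n) * ((l ^ (2*k))⁻¹) ^ n = 1 := by
    rw [inv_pow, ← pow_mul, mul_inv_cancel₀ (by positivity)]
  calc l ^ (2*k*n) * ∫ z : Fin n → Fin k → ℂ, (∏ j, φ j (l • z j)) * G z
      ≤ l ^ (2*k*n) * (((l ^ (2*k))⁻¹) ^ n * (T * ∏ j ∈ univ.erase j₀, ∫ u, φ j u)) := by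
        apply mul_le_mul_of_nonneg_left _ (by positivity)
        rw [step2] at step1
        calc ∫ z : Fin n → Fin k → ℂ, (∏ j, φ j (l • z j)) * G z
            ≤ ∏ j, ∫ w, ψ j w := step1
          _ ≤ ∏ j, ((l ^ (2*k))⁻¹ * Q j) := step3
          _ = _ := step4
    _ = (∏ j ∈ univ.erase j₀, ∫ u, φ j u) * T := by
        rw [← mul_assoc, hpow, one_mul]; ring

end Master

section Pointwise

open Metric Set

lemma support_coord_bound {k n : ℕ} (φ : Fin n → ((Fin k → ℂ) → ℝ))
    (hsupp : ∀ j, Function.support (φ j) ⊆ {z : Fin k → ℂ | ∀ i, ‖z i‖ < 1})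
    {l : ℝ} (hl0 : 0 < l) {z : Fin n → Fin k → ℂ}
    (hz : ∀ j, φ j (l • z j) ≠ 0) : ∀ j i, l * ‖z j i‖ < 1 := by
  intro j i
  have hmem := hsupp j (Function.mem_support.2 (hz j)) i
  simp only [Set.mem_setOf_eq, Pi.smul_apply] at hmem
  rwa [norm_smul, Real.norm_eq_abs, abs_of_pos hl0] at hmem

lemma pointwise1 {k n : ℕ} (hk : 1 ≤ k) (hn : 1 ≤ n)
    (φ : Fin n → ((Fin k → ℂ) → ℝ)) (hnn : ∀ j w, 0 ≤ φ j w)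
    (hsupp : ∀ j, Function.support (φ j) ⊆ {z : Fin k → ℂ | ∀ i, ‖z i‖ < 1})
    {l : ℝ} (hl : 1 ≤ l) (x₀ : Fin k → ℂ) (x : Fin n → Fin k → ℂ)
    (hx₀ : ∀ i, ‖x₀ i‖ < 1) (hx : ∀ j i, ‖x j i‖ < 1) :
    ∀ᵐ z : Fin n → Fin k → ℂ,
      (∏ j, φ j (l • z j)) * |Real.log (∑ j, euclideanNormC (x j - x₀ - z j))|
        ≤ (∏ j, φ j (l • z j)) *
            (Real.log (3 * Real.sqrt k * n) + negLog ‖x ⟨0, hn⟩ - x₀ - z ⟨0, hn⟩‖) := by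
  have hl0 : (0:ℝ) < l := lt_of_lt_of_le one_pos hl
  haveI : Nontrivial (Fin k → ℂ) := nontrivial_V hk
  haveI : Nonempty (Fin k) := ⟨⟨0, hk⟩⟩
  set j₀ : Fin n := ⟨0, hn⟩
  have hae : ∀ᵐ z : Fin n → Fin k → ℂ, z j₀ ≠ x j₀ - x₀ := by
    rw [show (volume : Measure (Fin n → Fin k → ℂ)) = Measure.pi fun _ => volume from
      volume_pi]
    exact Measure.ae_eval_ne (fun _ => (volume : Measure (Fin k → ℂ))) j₀ (x j₀ - x₀)
  have hsqrtk := one_le_sqrt_k hk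
  have hM : 1 ≤ 3 * Real.sqrt k * n := by
    have hn' : (1:ℝ) ≤ n := by exact_mod_cast hn
    nlinarith
  filter_upwards [hae] with z hz
  have hPnn : 0 ≤ ∏ j, φ j (l • z j) := Finset.prod_nonneg fun j _ => hnn _ _
  rcases eq_or_lt_of_le hPnn with hP | hP
  · rw [← hP, zero_mul, zero_mul]
  · apply mul_le_mul_of_nonneg_left _ hPnn
    have hne : ∀ j, φ j (l • z j) ≠ 0 := by
      intro j
      exact Finset.prod_ne_zero_iff.1 (ne_of_gt hP) j (mem_univ j)
    have hcoord := support_coord_bound φ hsupp hl0 hne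
    have hterm_le : ∀ j, euclideanNormC (x j - x₀ - z j) ≤ Real.sqrt k * 3 := by
      intro j
      apply euclideanNormC.le_of_coords (by norm_num)
      intro i
      have h1 := hx j i
      have h2 := hx₀ i
      have h3 : ‖z j i‖ ≤ 1 := by
        have := hcoord j i
        nlinarith [norm_nonneg (z j i)]
      calc ‖(x j - x₀ - z j) i‖ = ‖x j i - x₀ i - z j i‖ := rfl
        _ ≤ ‖x j i - x₀ i‖ + ‖z j i‖ := norm_sub_le _ _
        _ ≤ ‖x j i‖ + ‖x₀ i‖ + ‖z j i‖ := by
            have := norm_sub_le (x j i) (x₀ i); linarith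
        _ ≤ 3 := by linarith
    set Sz := ∑ j, euclideanNormC (x j - x₀ - z j) with hSz
    have hSz_nn : 0 ≤ Sz := Finset.sum_nonneg fun j _ => euclideanNormC.nonneg _
    have hSz_le : Sz ≤ 3 * Real.sqrt k * n := by
      calc Sz ≤ ∑ _j : Fin n, Real.sqrt k * 3 :=
            Finset.sum_le_sum fun j _ => hterm_le j
        _ = n * (Real.sqrt k * 3) := by rw [Finset.sum_const, Finset.card_univ]; simp
        _ = 3 * Real.sqrt k * n := by ring
    rcases eq_or_lt_of_le hSz_nn with hSz0 | hSz0
    · rw [← hSz0, Real.log_zero, abs_zero]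
      have := negLog_nonneg ‖x j₀ - x₀ - z j₀‖
      have := Real.log_nonneg hM
      linarith
    · have habs := abs_log_le_add hM hSz0 hSz_le
      have hy : x j₀ - x₀ - z j₀ ≠ 0 := by
        intro hcontra
        exact hz (sub_eq_zero.1 hcontra).symm
      have hepos : 0 < euclideanNormC (x j₀ - x₀ - z j₀) :=
        lt_of_le_of_ne (euclideanNormC.nonneg _)
          (fun h => hy (euclideanNormC.eq_zero_iff.1 h.symm))
      have hterm : euclideanNormC (x j₀ - x₀ - z j₀) ≤ Sz :=
        Finset.single_le_sum (f := fun j => euclideanNormC (x j - x₀ - z j))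
          (fun j _ => euclideanNormC.nonneg _) (mem_univ j₀)
      have h1 : negLog Sz ≤ negLog (euclideanNormC (x j₀ - x₀ - z j₀)) :=
        negLog_anti hepos hterm
      have hnpos : 0 < ‖x j₀ - x₀ - z j₀‖ := norm_pos_iff.2 hy
      have h2 : negLog (euclideanNormC (x j₀ - x₀ - z j₀)) ≤ negLog ‖x j₀ - x₀ - z j₀‖ :=
        negLog_anti hnpos (euclideanNormC.norm_le _)
      linarith

lemma pointwiseA {k n : ℕ} (hk : 1 ≤ k) (hn : 1 ≤ n)
    (φ : Fin n → ((Fin k → ℂ) → ℝ)) (hnn : ∀ j w, 0 ≤ φ j w)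
    (hsupp : ∀ j, Function.support (φ j) ⊆ {z : Fin k → ℂ | ∀ i, ‖z i‖ < 1})
    {l : ℝ} (hl : 1 ≤ l) (x₀ : Fin k → ℂ) (x : Fin n → Fin k → ℂ)
    (hS : 0 < ∑ j, euclideanNormC (x j - x₀))
    (hcond : 2 * (Real.sqrt k * n) ≤ (∑ j, euclideanNormC (x j - x₀)) * l) :
    ∀ z : Fin n → Fin k → ℂ,
      (∏ j, φ j (l • z j)) * |Real.log (∑ j, euclideanNormC (x j - x₀ - z j))|
        ≤ (∏ j, φ j (l • z j)) *
            (|Real.log (∑ j, euclideanNormC (x j - x₀))| + Real.log 2) := by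
  intro z
  have hl0 : (0:ℝ) < l := lt_of_lt_of_le one_pos hl
  set S := ∑ j, euclideanNormC (x j - x₀) with hSdef
  have hPnn : 0 ≤ ∏ j, φ j (l • z j) := Finset.prod_nonneg fun j _ => hnn _ _
  rcases eq_or_lt_of_le hPnn with hP | hP
  · rw [← hP, zero_mul, zero_mul]
  · apply mul_le_mul_of_nonneg_left _ hPnn
    have hne : ∀ j, φ j (l • z j) ≠ 0 := fun j =>
      Finset.prod_ne_zero_iff.1 (ne_of_gt hP) j (mem_univ j)
    have hcoord := support_coord_bound φ hsupp hl0 hne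
    have hzbound : ∀ j, euclideanNormC (z j) ≤ Real.sqrt k * l⁻¹ := by
      intro j
      apply euclideanNormC.le_of_coords (by positivity)
      intro i
      have h := hcoord j i
      have hinv : ‖z j i‖ * l ≤ 1 := by linarith [mul_comm l ‖z j i‖]
      calc ‖z j i‖ = ‖z j i‖ * l * l⁻¹ := by field_simp
        _ ≤ 1 * l⁻¹ := by
            apply mul_le_mul_of_nonneg_right _ (inv_nonneg.2 hl0.le)
            linarith
        _ = l⁻¹ := one_mul _
    have hnear : |(∑ j, euclideanNormC (x j - x₀ - z j)) - S| ≤ S / 2 := by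
      have h1 : |(∑ j, euclideanNormC (x j - x₀ - z j)) - S|
          ≤ ∑ j, |euclideanNormC (x j - x₀ - z j) - euclideanNormC (x j - x₀)| := by
        rw [hSdef, ← Finset.sum_sub_distrib]
        exact Finset.abs_sum_le_sum_abs _ _
      have h2 : ∀ j, |euclideanNormC (x j - x₀ - z j) - euclideanNormC (x j - x₀)|
          ≤ euclideanNormC (z j) := fun j => euclideanNormC.abs_sub_le (x j - x₀) (z j)
      have h3 : ∑ j, euclideanNormC (z j) ≤ (n : ℝ) * (Real.sqrt k * l⁻¹) := by
        calc ∑ j, euclideanNormC (z j) ≤ ∑ _j : Fin n, Real.sqrt k * l⁻¹ :=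
              Finset.sum_le_sum fun j _ => hzbound j
          _ = n * (Real.sqrt k * l⁻¹) := by rw [Finset.sum_const, Finset.card_univ]; simp
      have h4 : (n : ℝ) * (Real.sqrt k * l⁻¹) ≤ S / 2 := by
        have h5 := mul_le_mul_of_nonneg_right hcond (inv_nonneg.2 hl0.le)
        rw [mul_assoc S, mul_inv_cancel₀ hl0.ne', mul_one] at h5
        linarith
      calc |(∑ j, euclideanNormC (x j - x₀ - z j)) - S|
          ≤ ∑ j, |euclideanNormC (x j - x₀ - z j) - euclideanNormC (x j - x₀)| := h1
        _ ≤ ∑ j, euclideanNormC (z j) := Finset.sum_le_sum fun j _ => h2 j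
        _ ≤ (n : ℝ) * (Real.sqrt k * l⁻¹) := h3
        _ ≤ S / 2 := h4
    exact abs_log_near hS hnear

end Pointwise


lemma arith_bound1 {P A C₁ B CW L : ℝ} (hP : 0 ≤ P) (hA : 0 ≤ A) (hC₁ : 0 ≤ C₁)
    (hB : 0 ≤ B) (hCW : 0 ≤ CW) (hL : 0 ≤ L) :
    P * ((C₁ + L) * A + B * CW)
      ≤ (P + 1) * ((A + 1) * (C₁ + 1) + (B + 1) * (CW + 1))
        + (P + 1) * ((A + 1) * (C₁ + 1) + (B + 1) * (CW + 1)) * L := by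
  nlinarith [mul_nonneg hP hA, mul_nonneg hP hC₁, mul_nonneg hP hB, mul_nonneg hP hCW,
    mul_nonneg hA hC₁, mul_nonneg hB hCW, mul_nonneg (mul_nonneg hP hA) hC₁,
    mul_nonneg (mul_nonneg hP hB) hCW, mul_nonneg hP hL, mul_nonneg hA hL,
    mul_nonneg (mul_nonneg hP hA) hL, mul_nonneg hC₁ hL,
    mul_nonneg (mul_nonneg hA hC₁) hL, mul_nonneg (mul_nonneg (mul_nonneg hP hA) hC₁) hL,
    mul_nonneg (mul_nonneg hB hCW) hL, mul_nonneg (mul_nonneg (mul_nonneg hP hB) hCW) hL]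

lemma arith_bound2 {P A L2 s : ℝ} (hP : 0 ≤ P) (hA : 0 ≤ A) (hL2 : 0 ≤ L2) (hs : 0 ≤ s) :
    P * (A * (s + L2))
      ≤ (P + 1) * (A + 1) * (L2 + 1) + (P + 1) * (A + 1) * (L2 + 1) * s := by
  nlinarith [mul_nonneg hP hA, mul_nonneg hP hL2, mul_nonneg hA hL2,
    mul_nonneg (mul_nonneg hP hA) hL2, mul_nonneg hP hs, mul_nonneg hA hs,
    mul_nonneg (mul_nonneg hP hA) hs, mul_nonneg hL2 hs,
    mul_nonneg (mul_nonneg hA hL2) hs, mul_nonneg (mul_nonneg (mul_nonneg hP hA) hL2) hs]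

/-- Elementary integral estimate: for smooth nonnegative bumps `φ₂, …, φ_m` supported in the
unit polydisc `𝔻^k`, the `λ`-rescaled averages of `|log(∑_j ‖x^{(j)} − x^{(1)} − z^{(j)}‖)|`
are bounded by `c + c·log λ`, and by `c + c·min(log λ, |log S|)` when
`S = ∑_j ‖x^{(j)} − x^{(1)}‖ > 0`. -/
theorem rescaled_log_integral_estimate (k m : ℕ) (hk : 1 ≤ k) (hm : 2 ≤ m)
    (φ : Fin (m - 1) → ((Fin k → ℂ) → ℝ))
    (hφ_smooth : ∀ j, ContDiff ℝ (⊤ : ℕ∞) (φ j))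
    (hφ_nonneg : ∀ j z, 0 ≤ φ j z)
    (hφ_cpt : ∀ j, HasCompactSupport (φ j))
    (hφ_supp : ∀ j, Function.support (φ j) ⊆ {z : Fin k → ℂ | ∀ i, ‖z i‖ < 1}) :
    ∃ c > (0 : ℝ), ∀ l : ℝ, 1 ≤ l →
      ∀ (x₀ : Fin k → ℂ) (x : Fin (m - 1) → Fin k → ℂ),
      (∀ i, ‖x₀ i‖ < 1) → (∀ j i, ‖x j i‖ < 1) →
      (l ^ (2 * k * (m - 1)) *
          ∫ z : Fin (m - 1) → Fin k → ℂ,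
            (∏ j, φ j (l • z j)) *
              |Real.log (∑ j, euclideanNormC (x j - x₀ - z j))|
        ≤ c + c * Real.log l) ∧
      (0 < ∑ j, euclideanNormC (x j - x₀) →
        l ^ (2 * k * (m - 1)) *
            ∫ z : Fin (m - 1) → Fin k → ℂ,
              (∏ j, φ j (l • z j)) *
                |Real.log (∑ j, euclideanNormC (x j - x₀ - z j))|
          ≤ c + c * min (Real.log l) |Real.log (∑ j, euclideanNormC (x j - x₀))|) := by
  haveI : Nonempty (Fin k) := ⟨⟨0, hk⟩⟩
  have hn : 1 ≤ m - 1 := by omega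
  set j₀ : Fin (m - 1) := ⟨0, hn⟩ with hj₀
  set A : Fin (m - 1) → ℝ := fun j => ∫ u, φ j u with hAdef
  have hA : ∀ j, 0 ≤ A j := fun j => integral_nonneg fun u => hφ_nonneg j u
  set P : ℝ := ∏ j ∈ univ.erase j₀, A j with hPdef
  have hP : 0 ≤ P := Finset.prod_nonneg fun j _ => hA j
  obtain ⟨w₀, hw₀⟩ := ((hφ_smooth j₀).continuous).exists_forall_ge_of_hasCompactSupport
    (hφ_cpt j₀)
  set B : ℝ := φ j₀ w₀ with hBdef
  have hB : ∀ w, φ j₀ w ≤ B := hw₀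
  have hB0 : 0 ≤ B := le_trans (hφ_nonneg j₀ 0) (hB 0)
  set CW : ℝ := ∫ u, W0 k u with hCWdef
  have hCW : 0 ≤ CW := integral_nonneg fun u => W0_nonneg k u
  have hsqrtk := one_le_sqrt_k hk
  have hn' : (1:ℝ) ≤ (m - 1 : ℕ) := by exact_mod_cast hn
  set C₁ : ℝ := Real.log (3 * Real.sqrt k * (m - 1 : ℕ)) with hC₁def
  have hC₁ : 0 ≤ C₁ := Real.log_nonneg (by nlinarith)
  set C₃ : ℝ := Real.log (2 * (Real.sqrt k * (m - 1 : ℕ))) with hC₃def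
  have hC₃ : 0 ≤ C₃ := Real.log_nonneg (by nlinarith)
  have hlog2 : 0 ≤ Real.log 2 := Real.log_nonneg (by norm_num)
  set K : ℝ := (P + 1) * ((A j₀ + 1) * (C₁ + 1) + (B + 1) * (CW + 1)) with hKdef
  have hK : 0 ≤ K := by
    apply mul_nonneg (by linarith)
    have e1 : 0 ≤ (A j₀ + 1) * (C₁ + 1) := mul_nonneg (by linarith [hA j₀]) (by linarith)
    have e2 : 0 ≤ (B + 1) * (CW + 1) := mul_nonneg (by linarith) (by linarith)
    linarith
  set K' : ℝ := (P + 1) * (A j₀ + 1) * (Real.log 2 + 1) with hK'def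
  have hK' : 0 ≤ K' := by
    apply mul_nonneg (mul_nonneg (by linarith) (by linarith [hA j₀])) (by linarith)
  set c : ℝ := K * (1 + C₃) + K' + 1 with hcdef
  have hc0 : 0 < c := by
    have : 0 ≤ K * (1 + C₃) := mul_nonneg hK (by linarith)
    rw [hcdef]; linarith
  have hKc : K ≤ c := by
    have h1 : K * (1 + C₃) = K + K * C₃ := by ring
    have h2 : 0 ≤ K * C₃ := mul_nonneg hK hC₃
    rw [hcdef]; rw [h1]; linarith
  refine ⟨c, hc0, ?_⟩
  intro l hl x₀ x hx₀ hx
  have hl0 : (0:ℝ) < l := lt_of_lt_of_le one_pos hl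
  have hlog : 0 ≤ Real.log l := Real.log_nonneg hl
  -- Part 1 bound
  have hse := single_estimate hk ((hφ_smooth j₀).continuous) (hφ_nonneg j₀) (hφ_cpt j₀)
    hB hC₁ hl (x j₀ - x₀)
  have part1 : l ^ (2 * k * (m - 1)) *
      ∫ z : Fin (m - 1) → Fin k → ℂ,
        (∏ j, φ j (l • z j)) * |Real.log (∑ j, euclideanNormC (x j - x₀ - z j))|
      ≤ K + K * Real.log l := by
    have h1 := master hn φ (fun j => (hφ_smooth j).continuous) hφ_nonneg hφ_cpt hl
      (fun z => |Real.log (∑ j, euclideanNormC (x j - x₀ - z j))|)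
      (fun z => abs_nonneg _)
      (fun w => C₁ + negLog ‖x j₀ - x₀ - w‖)
      (fun w => add_nonneg hC₁ (negLog_nonneg _))
      hse.1
      ((C₁ + Real.log l) * A j₀ + B * CW)
      (by
        have : 0 ≤ (C₁ + Real.log l) * A j₀ :=
          mul_nonneg (by linarith) (hA j₀)
        have : 0 ≤ B * CW := mul_nonneg hB0 hCW
        linarith [mul_nonneg (show (0:ℝ) ≤ C₁ + Real.log l by linarith) (hA j₀)])
      hse.2
      (pointwise1 hk hn φ hφ_nonneg hφ_supp hl x₀ x hx₀ hx)
    have h2 : P * ((C₁ + Real.log l) * A j₀ + B * CW) ≤ K + K * Real.log l := by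
      have := arith_bound1 hP (hA j₀) hC₁ hB0 hCW hlog
      rw [hKdef]
      linarith
    calc l ^ (2 * k * (m - 1)) *
        ∫ z : Fin (m - 1) → Fin k → ℂ,
          (∏ j, φ j (l • z j)) * |Real.log (∑ j, euclideanNormC (x j - x₀ - z j))|
        ≤ P * ((C₁ + Real.log l) * A j₀ + B * CW) := h1
      _ ≤ K + K * Real.log l := h2
  constructor
  · calc l ^ (2 * k * (m - 1)) *
        ∫ z : Fin (m - 1) → Fin k → ℂ,
          (∏ j, φ j (l • z j)) * |Real.log (∑ j, euclideanNormC (x j - x₀ - z j))|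
        ≤ K + K * Real.log l := part1
      _ ≤ c + c * Real.log l := by
          have := mul_le_mul_of_nonneg_right hKc hlog
          linarith
  · intro hS
    set S := ∑ j, euclideanNormC (x j - x₀) with hSdef
    have habsS : 0 ≤ |Real.log S| := abs_nonneg _
    have part2 : l ^ (2 * k * (m - 1)) *
        ∫ z : Fin (m - 1) → Fin k → ℂ,
          (∏ j, φ j (l • z j)) * |Real.log (∑ j, euclideanNormC (x j - x₀ - z j))|
        ≤ c + c * |Real.log S| := by
      by_cases hcase : 2 * (Real.sqrt k * (m - 1 : ℕ)) ≤ S * l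
      · -- case A
        have hTeq : ∫ w : Fin k → ℂ, φ j₀ (l • w) * (|Real.log S| + Real.log 2)
            = (l ^ (2*k))⁻¹ * (A j₀ * (|Real.log S| + Real.log 2)) := by
          have := scale_int k (fun u => φ j₀ u * (|Real.log S| + Real.log 2)) hl0.le
          rw [show (fun w : Fin k → ℂ => φ j₀ (l • w) * (|Real.log S| + Real.log 2))
            = fun w => (fun u => φ j₀ u * (|Real.log S| + Real.log 2)) (l • w) from rfl]
          rw [this, integral_mul_const]
        have h1 := master hn φ (fun j => (hφ_smooth j).continuous) hφ_nonneg hφ_cpt hl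
          (fun z => |Real.log (∑ j, euclideanNormC (x j - x₀ - z j))|)
          (fun z => abs_nonneg _)
          (fun _ => |Real.log S| + Real.log 2)
          (fun w => by positivity)
          ((phi_scaled_integrable ((hφ_smooth j₀).continuous) (hφ_cpt j₀) hl0).mul_const _)
          (A j₀ * (|Real.log S| + Real.log 2))
          (mul_nonneg (hA j₀) (by positivity))
          (le_of_eq hTeq)
          (Filter.Eventually.of_forall
            (pointwiseA hk hn φ hφ_nonneg hφ_supp hl x₀ x hS hcase))
        have h2 : P * (A j₀ * (|Real.log S| + Real.log 2)) ≤ K' + K' * |Real.log S| := by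
          have := arith_bound2 hP (hA j₀) hlog2 habsS
          rw [hK'def]
          linarith
        have hcK' : K' ≤ c := by
          have : 0 ≤ K * (1 + C₃) := mul_nonneg hK (by linarith)
          rw [hcdef]; linarith
        calc l ^ (2 * k * (m - 1)) *
            ∫ z : Fin (m - 1) → Fin k → ℂ,
              (∏ j, φ j (l • z j)) * |Real.log (∑ j, euclideanNormC (x j - x₀ - z j))|
            ≤ P * (A j₀ * (|Real.log S| + Real.log 2)) := h1
          _ ≤ K' + K' * |Real.log S| := h2
          _ ≤ c + c * |Real.log S| := by
              have := mul_le_mul_of_nonneg_right hcK' habsS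
              linarith
      · -- case B
        have hSl : S * l < 2 * (Real.sqrt k * (m - 1 : ℕ)) := not_le.1 hcase
        have hlogl_le : Real.log l ≤ C₃ + |Real.log S| := by
          have hSlpos : 0 < S * l := mul_pos hS hl0
          have h1 : Real.log (S * l) ≤ C₃ := by
            rw [hC₃def]
            exact Real.log_le_log hSlpos hSl.le
          rw [Real.log_mul hS.ne' hl0.ne'] at h1
          have h2 := neg_abs_le (Real.log S)
          linarith
        have h3 : K + K * Real.log l ≤ c + c * |Real.log S| := by
          have h4 : K * Real.log l ≤ K * (C₃ + |Real.log S|) :=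
            mul_le_mul_of_nonneg_left hlogl_le hK
          have h5 : K + K * (C₃ + |Real.log S|) = K * (1 + C₃) + K * |Real.log S| := by ring
          have h6 : K * |Real.log S| ≤ c * |Real.log S| :=
            mul_le_mul_of_nonneg_right hKc habsS
          have h7 : K * (1 + C₃) ≤ c := by rw [hcdef]; linarith
          linarith
        linarith [part1]
    rcases le_total (Real.log l) |Real.log S| with h | h
    · rw [min_eq_left h]
      calc l ^ (2 * k * (m - 1)) *
          ∫ z : Fin (m - 1) → Fin k → ℂ,
            (∏ j, φ j (l • z j)) * |Real.log (∑ j, euclideanNormC (x j - x₀ - z j))|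
          ≤ K + K * Real.log l := part1
        _ ≤ c + c * Real.log l := by
            have := mul_le_mul_of_nonneg_right hKc hlog
            linarith
    · rw [min_eq_right h]
      exact part2
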